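/- Let $X_1,X_2,Y_1,Y_2$ be Banach spaces, $A_1,A_2$ closed densely defined operators on $X_1,X_2$, and $B_1\in\mathcal{L}(Y_1,X_1)$, $B_2\in\mathcal{L}(Y_2,X_2)$, $C_1\in\mathcal{L}(X_1,Y_2)$, $C_2\in\mathcal{L}(X_2,Y_1)$. Define the full block operator $A$ on $X_1\times X_2$ by $A(x_1,x_2)=(A_1x_1+B_1C_2x_2,\ B_2C_1x_1+A_2x_2)$ with domain $\mathrm{Dom}(A_1)\times\mathrm{Dom}(A_2)$. If $\lambda\in\rho(A_1)\cap\rho(A_2)$ and $1\in\rho(C_2R(\lambda,A_2)B_2C_1R(\lambda,A_1)B_1)$, then $\lambda\in\rho(A)$ and, writing $D_\lambda=I-C_2R(\lambda,A_2)B_2C_1R(\lambda,A_1)B_1$ and $S_1(\lambda)^{-1}=R(\lambda,A_2)+R(\lambda,A_2)B_2C_1R(\lambda,A_1)B_1D_\lambda^{-1}C_2R(\lambda,A_2)$, the resolvent of $A$ equals the block matrix with entries $R(\lambda,A_1)+R(\lambda,A_1)B_1C_2S_1(\lambda)^{-1}B_2C_1R(\lambda,A_1)$, $R(\lambda,A_1)B_1C_2S_1(\lambda)^{-1}$,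 $S_1(\lambda)^{-1}B_2C_1R(\lambda,A_1)$, and $S_1(\lambda)^{-1}$. -/

import Mathlib

/-!
Solving `(λ - A) x = y` for `x₁ = R(λ,A₁) (y₁ + B₁ C₂ x₂)` leaves, for `x₂`, the equation
`(λ - A₂ - B₂ C₁ R(λ,A₁) B₁ C₂) x₂ = y₂ + B₂ C₁ R(λ,A₁) y₁` with the Schur complement on the left.
That complement is `λ - (A₂ + U V)` for the bounded perturbation `U = B₂ C₁ R(λ,A₁) B₁`, `V = C₂`,
and the Sherman–Morrison–Woodbury formula
`R(λ, A₂ + U V) = R(λ,A₂) + R(λ,A₂) U (I - V R(λ,A₂) U)⁻¹ V R(λ,A₂)` identifies its inverse with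
`S₁(λ)⁻¹`. Back-substitution gives the block formula.
-/

/-- `R` is the (bounded) resolvent of the (possibly unbounded) operator `T`,
defined on the domain `dom`, at the point `lam`. -/
def IsResolventOf {X : Type*} [NormedAddCommGroup X] [NormedSpace ℂ X]
    (dom : Submodule ℂ X) (T : X →ₗ[ℂ] X) (lam : ℂ) (R : X →L[ℂ] X) : Prop :=
  (∀ x : X, R x ∈ dom) ∧
  (∀ x : X, lam • R x - T (R x) = x) ∧
  (∀ x ∈ dom, R (lam • x - T x) = x)

theorem IsResolventOf.add_comp {X Y : Type*} [NormedAddCommGroup X] [NormedSpace ℂ X]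
    [NormedAddCommGroup Y] [NormedSpace ℂ Y]
    {dom : Submodule ℂ X} {T : X →ₗ[ℂ] X} {lam : ℂ} {R : X →L[ℂ] X}
    (hR : IsResolventOf dom T lam R) {U : Y →L[ℂ] X} {V : X →L[ℂ] Y} {Dinv : Y →L[ℂ] Y}
    (hD₁ : (1 - V.comp (R.comp U)) * Dinv = 1) (hD₂ : Dinv * (1 - V.comp (R.comp U)) = 1) :
    IsResolventOf dom (T + ((U.comp V : X →L[ℂ] X) : X →ₗ[ℂ] X)) lam
      (R + R.comp (U.comp (Dinv.comp (V.comp R)))) := by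
  obtain ⟨hmem, hright, hleft⟩ := hR
  have hD₁' (z : Y) : z + V (R (U (Dinv z))) = Dinv z :=
    eq_sub_iff_add_eq.mp (by simpa using (DFunLike.congr_fun hD₁ z).symm)
  have hD₂' (z : Y) : Dinv (z - V (R (U z))) = z := by
    simpa using DFunLike.congr_fun hD₂ z
  refine ⟨fun x => add_mem (hmem x) (hmem _), fun x => ?_, fun x hx => ?_⟩
  · have hUV : U (V (R x + R (U (Dinv (V (R x)))))) = U (Dinv (V (R x))) := by
      rw [map_add, hD₁']
    simp only [add_apply, LinearMap.add_apply, ContinuousLinearMap.coe_coe,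
      ContinuousLinearMap.comp_apply]
    rw [hUV, map_add T, smul_add]
    linear_combination (norm := module) hright x + hright (U (Dinv (V (R x))))
  · have hRx : R (lam • x - (T x + U (V x))) = x - R (U (V x)) := by
      rw [← sub_sub, map_sub, hleft x hx]
    simp only [add_apply, LinearMap.add_apply, ContinuousLinearMap.coe_coe,
      ContinuousLinearMap.comp_apply]
    rw [hRx, map_sub V, hD₂', sub_add_cancel]

section Block

variable {X₁ X₂ : Type*} [NormedAddCommGroup X₁] [NormedSpace ℂ X₁]
  [NormedAddCommGroup X₂] [NormedSpace ℂ X₂]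

def blockOperator (A₁ : X₁ →ₗ[ℂ] X₁) (A₂ : X₂ →ₗ[ℂ] X₂) (E : X₂ →L[ℂ] X₁) (F : X₁ →L[ℂ] X₂) :
    X₁ × X₂ →ₗ[ℂ] X₁ × X₂ :=
  LinearMap.prod
    (A₁.comp (LinearMap.fst ℂ X₁ X₂) + (E : X₂ →ₗ[ℂ] X₁).comp (LinearMap.snd ℂ X₁ X₂))
    (A₂.comp (LinearMap.snd ℂ X₁ X₂) + (F : X₁ →ₗ[ℂ] X₂).comp (LinearMap.fst ℂ X₁ X₂))

/-- The operator matrix `[[R₁ + R₁ E S F R₁, R₁ E S], [S F R₁, S]]`, where `S` stands for the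
inverse of the Schur complement `λ - A₂ - F R₁ E`. -/
def schurResolvent (R₁ : X₁ →L[ℂ] X₁) (S : X₂ →L[ℂ] X₂) (E : X₂ →L[ℂ] X₁) (F : X₁ →L[ℂ] X₂) :
    X₁ × X₂ →L[ℂ] X₁ × X₂ :=
  ContinuousLinearMap.prod
    ((R₁ + R₁.comp (E.comp (S.comp (F.comp R₁)))).comp (ContinuousLinearMap.fst ℂ X₁ X₂) +
      (R₁.comp (E.comp S)).comp (ContinuousLinearMap.snd ℂ X₁ X₂))
    ((S.comp (F.comp R₁)).comp (ContinuousLinearMap.fst ℂ X₁ X₂) +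
      S.comp (ContinuousLinearMap.snd ℂ X₁ X₂))

theorem blockOperator_apply (A₁ : X₁ →ₗ[ℂ] X₁) (A₂ : X₂ →ₗ[ℂ] X₂) (E : X₂ →L[ℂ] X₁)
    (F : X₁ →L[ℂ] X₂) (x : X₁ × X₂) :
    blockOperator A₁ A₂ E F x = (A₁ x.1 + E x.2, A₂ x.2 + F x.1) := rfl

theorem schurResolvent_apply (R₁ : X₁ →L[ℂ] X₁) (S : X₂ →L[ℂ] X₂) (E : X₂ →L[ℂ] X₁)
    (F : X₁ →L[ℂ] X₂) (x : X₁ × X₂) :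
    schurResolvent R₁ S E F x =
      (R₁ (x.1 + E (S (F (R₁ x.1) + x.2))), S (F (R₁ x.1) + x.2)) := by
  simp [schurResolvent, map_add, add_assoc]

theorem IsResolventOf.blockOperator_schurResolvent {dom₁ : Submodule ℂ X₁} {dom₂ : Submodule ℂ X₂}
    {A₁ : X₁ →ₗ[ℂ] X₁} {A₂ : X₂ →ₗ[ℂ] X₂} {E : X₂ →L[ℂ] X₁} {F : X₁ →L[ℂ] X₂} {lam : ℂ}
    {R₁ : X₁ →L[ℂ] X₁} {S : X₂ →L[ℂ] X₂} (hR₁ : IsResolventOf dom₁ A₁ lam R₁)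
    (hS : IsResolventOf dom₂ (A₂ + ((F.comp (R₁.comp E) : X₂ →L[ℂ] X₂) : X₂ →ₗ[ℂ] X₂)) lam S) :
    IsResolventOf (dom₁.prod dom₂) (blockOperator A₁ A₂ E F) lam (schurResolvent R₁ S E F) := by
  obtain ⟨h₁mem, h₁right, h₁left⟩ := hR₁
  obtain ⟨hSmem, hSright, hSleft⟩ := hS
  refine ⟨fun x => ?_, fun x => ?_, fun x hx => ?_⟩
  · rw [schurResolvent_apply]
    exact ⟨h₁mem _, hSmem _⟩
  · have hy := hSright (F (R₁ x.1) + x.2)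
    simp only [LinearMap.add_apply, ContinuousLinearMap.coe_coe,
      ContinuousLinearMap.comp_apply] at hy
    rw [schurResolvent_apply, blockOperator_apply]
    refine Prod.ext ?_ ?_
    · simp only [Prod.fst_sub, Prod.smul_fst]
      linear_combination (norm := module) h₁right (x.1 + E (S (F (R₁ x.1) + x.2)))
    · rw [Prod.snd_sub, Prod.smul_snd, map_add R₁, map_add F]
      linear_combination (norm := module) hy
  · obtain ⟨hx₁, hx₂⟩ := Submodule.mem_prod.mp hx
    have hv : lam • x - blockOperator A₁ A₂ E F x =
        (lam • x.1 - A₁ x.1 - E x.2, lam • x.2 - A₂ x.2 - F x.1) := by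
      rw [blockOperator_apply]
      exact Prod.ext (sub_sub _ _ _).symm (by simp only [Prod.snd_sub, Prod.smul_snd]; abel)
    have hR₁v : R₁ (lam • x.1 - A₁ x.1 - E x.2) = x.1 - R₁ (E x.2) := by
      rw [map_sub, h₁left _ hx₁]
    have hSchur : F (x.1 - R₁ (E x.2)) + (lam • x.2 - A₂ x.2 - F x.1) =
        lam • x.2 - (A₂ + ((F.comp (R₁.comp E) : X₂ →L[ℂ] X₂) : X₂ →ₗ[ℂ] X₂)) x.2 := by
      simp only [map_sub, LinearMap.add_apply, ContinuousLinearMap.coe_coe,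
        ContinuousLinearMap.comp_apply]
      abel
    rw [hv, schurResolvent_apply, hR₁v, hSchur, hSleft _ hx₂, sub_add_cancel, h₁left _ hx₁]

end Block

theorem stmt_5_general (X₁ X₂ Y₁ Y₂ : Type*)
    [NormedAddCommGroup X₁] [NormedSpace ℂ X₁]
    [NormedAddCommGroup X₂] [NormedSpace ℂ X₂]
    [NormedAddCommGroup Y₁] [NormedSpace ℂ Y₁]
    [NormedAddCommGroup Y₂] [NormedSpace ℂ Y₂]
    (dom₁ : Submodule ℂ X₁) (dom₂ : Submodule ℂ X₂)
    (A₁ : X₁ →ₗ[ℂ] X₁) (A₂ : X₂ →ₗ[ℂ] X₂)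
    (B₁ : Y₁ →L[ℂ] X₁) (B₂ : Y₂ →L[ℂ] X₂)
    (C₁ : X₁ →L[ℂ] Y₂) (C₂ : X₂ →L[ℂ] Y₁)
    (lam : ℂ) (R₁ : X₁ →L[ℂ] X₁) (R₂ : X₂ →L[ℂ] X₂)
    (hR₁ : IsResolventOf dom₁ A₁ lam R₁) (hR₂ : IsResolventOf dom₂ A₂ lam R₂)
    -- `1 ∈ ρ(C₂ R(λ,A₂) B₂ C₁ R(λ,A₁) B₁)`, i.e. `I - D` is boundedly invertible
    (Dinv : Y₁ →L[ℂ] Y₁)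
    (hDinv₁ : (1 - (C₂.comp (R₂.comp (B₂.comp (C₁.comp (R₁.comp B₁)))))) * Dinv = 1)
    (hDinv₂ : Dinv * (1 - (C₂.comp (R₂.comp (B₂.comp (C₁.comp (R₁.comp B₁)))))) = 1) :
    -- the Schur complement inverse `S₁(λ)⁻¹`
    ∀ S₁inv : X₂ →L[ℂ] X₂,
      S₁inv = R₂ + R₂.comp ((B₂.comp (C₁.comp (R₁.comp B₁))).comp
                (Dinv.comp (C₂.comp R₂))) →
    IsResolventOf (dom₁.prod dom₂)
      (LinearMap.prod
        (A₁.comp (LinearMap.fst ℂ X₁ X₂) +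
          ((B₁.comp C₂ : X₂ →L[ℂ] X₁) : X₂ →ₗ[ℂ] X₁).comp (LinearMap.snd ℂ X₁ X₂))
        (A₂.comp (LinearMap.snd ℂ X₁ X₂) +
          ((B₂.comp C₁ : X₁ →L[ℂ] X₂) : X₁ →ₗ[ℂ] X₂).comp (LinearMap.fst ℂ X₁ X₂)))
      lam
      (ContinuousLinearMap.prod
        ((R₁ + R₁.comp ((B₁.comp C₂).comp (S₁inv.comp ((B₂.comp C₁).comp R₁)))).comp
            (ContinuousLinearMap.fst ℂ X₁ X₂) +
          (R₁.comp ((B₁.comp C₂).comp S₁inv)).comp (ContinuousLinearMap.snd ℂ X₁ X₂))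
        ((S₁inv.comp ((B₂.comp C₁).comp R₁)).comp (ContinuousLinearMap.fst ℂ X₁ X₂) +
          S₁inv.comp (ContinuousLinearMap.snd ℂ X₁ X₂))) := by
  rintro S₁inv rfl
  have hSchur := hR₂.add_comp (U := B₂.comp (C₁.comp (R₁.comp B₁))) (V := C₂) hDinv₁ hDinv₂
  exact hR₁.blockOperator_schurResolvent (E := B₁.comp C₂) (F := B₂.comp C₁) hSchur

theorem stmt_5 (X₁ X₂ Y₁ Y₂ : Type*)
    [NormedAddCommGroup X₁] [NormedSpace ℂ X₁] [CompleteSpace X₁]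
    [NormedAddCommGroup X₂] [NormedSpace ℂ X₂] [CompleteSpace X₂]
    [NormedAddCommGroup Y₁] [NormedSpace ℂ Y₁] [CompleteSpace Y₁]
    [NormedAddCommGroup Y₂] [NormedSpace ℂ Y₂] [CompleteSpace Y₂]
    (dom₁ : Submodule ℂ X₁) (dom₂ : Submodule ℂ X₂)
    (A₁ : X₁ →ₗ[ℂ] X₁) (A₂ : X₂ →ₗ[ℂ] X₂)
    (hdense₁ : Dense (dom₁ : Set X₁)) (hdense₂ : Dense (dom₂ : Set X₂))
    (hclosed₁ : IsClosed {p : X₁ × X₁ | p.1 ∈ dom₁ ∧ A₁ p.1 = p.2})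
    (hclosed₂ : IsClosed {p : X₂ × X₂ | p.1 ∈ dom₂ ∧ A₂ p.1 = p.2})
    (B₁ : Y₁ →L[ℂ] X₁) (B₂ : Y₂ →L[ℂ] X₂)
    (C₁ : X₁ →L[ℂ] Y₂) (C₂ : X₂ →L[ℂ] Y₁)
    (lam : ℂ) (R₁ : X₁ →L[ℂ] X₁) (R₂ : X₂ →L[ℂ] X₂)
    (hR₁ : IsResolventOf dom₁ A₁ lam R₁) (hR₂ : IsResolventOf dom₂ A₂ lam R₂)
    -- `1 ∈ ρ(C₂ R(λ,A₂) B₂ C₁ R(λ,A₁) B₁)`, i.e. `I - D` is boundedly invertible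
    (Dinv : Y₁ →L[ℂ] Y₁)
    (hDinv₁ : (1 - (C₂.comp (R₂.comp (B₂.comp (C₁.comp (R₁.comp B₁)))))) * Dinv = 1)
    (hDinv₂ : Dinv * (1 - (C₂.comp (R₂.comp (B₂.comp (C₁.comp (R₁.comp B₁)))))) = 1) :
    -- the Schur complement inverse `S₁(λ)⁻¹`
    ∀ S₁inv : X₂ →L[ℂ] X₂,
      S₁inv = R₂ + R₂.comp ((B₂.comp (C₁.comp (R₁.comp B₁))).comp
                (Dinv.comp (C₂.comp R₂))) →
    IsResolventOf (dom₁.prod dom₂)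
      (LinearMap.prod
        (A₁.comp (LinearMap.fst ℂ X₁ X₂) +
          ((B₁.comp C₂ : X₂ →L[ℂ] X₁) : X₂ →ₗ[ℂ] X₁).comp (LinearMap.snd ℂ X₁ X₂))
        (A₂.comp (LinearMap.snd ℂ X₁ X₂) +
          ((B₂.comp C₁ : X₁ →L[ℂ] X₂) : X₁ →ₗ[ℂ] X₂).comp (LinearMap.fst ℂ X₁ X₂)))
      lam
      (ContinuousLinearMap.prod
        ((R₁ + R₁.comp ((B₁.comp C₂).comp (S₁inv.comp ((B₂.comp C₁).comp R₁)))).comp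
            (ContinuousLinearMap.fst ℂ X₁ X₂) +
          (R₁.comp ((B₁.comp C₂).comp S₁inv)).comp (ContinuousLinearMap.snd ℂ X₁ X₂))
        ((S₁inv.comp ((B₂.comp C₁).comp R₁)).comp (ContinuousLinearMap.fst ℂ X₁ X₂) +
          S₁inv.comp (ContinuousLinearMap.snd ℂ X₁ X₂))) :=
  stmt_5_general X₁ X₂ Y₁ Y₂ dom₁ dom₂ A₁ A₂ B₁ B₂ C₁ C₂ lam R₁ R₂ hR₁ hR₂ Dinv hDinv₁ hDinv₂
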